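/- arXiv:1912.01199 — 4 statements merged into one kernel-verified Lean document; each statement's English description precedes it below -/
import Mathlib

section
/- For 0 < a ≤ 1 and Re(s) < 0, the Hurwitz zeta function satisfies ζ(s, a) = (2Γ(1−s)/(2π)^{1−s}) · ( sin(πs/2) · Σ_{n=1}^∞ cos(2πna)/n^{1−s} + cos(πs/2) · Σ_{n=1}^∞ sin(2πna)/n^{1−s} ). -/
open Complex Real Filter Set MeasureTheory

/-!
Split `ζ(s, a)` into its even and odd parts in `a`. Their functional equations express them at
`s = 1 - (1 - s)` through the cosine and sine zeta functions at `1 - s`, and since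
`Re(1 - s) > 1` these are given by their absolutely convergent Dirichlet series.
-/

namespace HurwitzZeta

lemma hasSum_nat_succ_cosZeta (a : ℝ) {s : ℂ} (hs : 1 < s.re) :
    HasSum (fun n : ℕ ↦ (Real.cos (2 * π * (n + 1) * a) : ℂ) / ((n : ℂ) + 1) ^ s)
      (cosZeta a s) := by
  have h := (hasSum_nat_add_iff' 1).mpr (hasSum_nat_cosZeta a hs)
  simpa [zero_cpow (ne_zero_of_one_lt_re hs), mul_right_comm _ a] using h

lemma hasSum_nat_succ_sinZeta (a : ℝ) {s : ℂ} (hs : 1 < s.re) :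
    HasSum (fun n : ℕ ↦ (Real.sin (2 * π * (n + 1) * a) : ℂ) / ((n : ℂ) + 1) ^ s)
      (sinZeta a s) := by
  have h := (hasSum_nat_add_iff' 1).mpr (hasSum_nat_sinZeta a hs)
  simpa [mul_right_comm _ a] using h

lemma hurwitzZeta_eq_cosZeta_sinZeta_one_sub (a : UnitAddCircle) {s : ℂ}
    (hs : ∀ n : ℕ, s ≠ 1 + n) (hs' : a ≠ 0 ∨ s ≠ 0) :
    hurwitzZeta a s = 2 * Gamma (1 - s) / (2 * π) ^ (1 - s) *
      (sin (π * s / 2) * cosZeta a (1 - s) + cos (π * s / 2) * sinZeta a (1 - s)) := by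
  have hs₁ (n : ℕ) : 1 - s ≠ -n := fun h ↦ hs n (by linear_combination -h)
  have hs₁' : a ≠ 0 ∨ 1 - s ≠ 1 := hs'.imp_right fun h h' ↦ h (by linear_combination -h')
  have hcos : cos (π * (1 - s) / 2) = sin (π * s / 2) := by
    rw [← Complex.cos_pi_div_two_sub]; ring_nf
  have hsin : sin (π * (1 - s) / 2) = cos (π * s / 2) := by
    rw [← Complex.sin_pi_div_two_sub]; ring_nf
  conv_lhs => rw [← sub_sub_cancel 1 s]
  rw [hurwitzZeta, hurwitzZetaEven_one_sub a hs₁ hs₁', hurwitzZetaOdd_one_sub a hs₁, hcos, hsin,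
    cpow_neg]
  ring

end HurwitzZeta

theorem hurwitz_formula_general (a : ℝ) (s : ℂ) (hs : s.re < 0) :
    HurwitzZeta.hurwitzZeta (a : UnitAddCircle) s =
      2 * Complex.Gamma (1 - s) / ((2 * π : ℝ) : ℂ) ^ (1 - s) *
        (Complex.sin ((π : ℂ) * s / 2) *
            ∑' n : ℕ, (Real.cos (2 * π * (n + 1) * a) : ℂ) / ((n : ℂ) + 1) ^ (1 - s) +
          Complex.cos ((π : ℂ) * s / 2) *
            ∑' n : ℕ, (Real.sin (2 * π * (n + 1) * a) : ℂ) / ((n : ℂ) + 1) ^ (1 - s)) := by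
  have hre : 1 < (1 - s).re := by simp; linarith
  have hs₁ (n : ℕ) : s ≠ 1 + n := fun h ↦ by
    have := congrArg re h; simp at this; linarith [n.cast_nonneg (α := ℝ)]
  have hs₀ : s ≠ 0 := fun h ↦ by simp [h] at hs
  rw [HurwitzZeta.hurwitzZeta_eq_cosZeta_sinZeta_one_sub _ hs₁ (.inr hs₀),
    (HurwitzZeta.hasSum_nat_succ_cosZeta a hre).tsum_eq,
    (HurwitzZeta.hasSum_nat_succ_sinZeta a hre).tsum_eq]
  push_cast
  rfl

theorem hurwitz_formula (a : ℝ) (ha : 0 < a) (ha' : a ≤ 1) (s : ℂ) (hs : s.re < 0) :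
    HurwitzZeta.hurwitzZeta (a : UnitAddCircle) s =
      2 * Complex.Gamma (1 - s) / ((2 * π : ℝ) : ℂ) ^ (1 - s) *
        (Complex.sin ((π : ℂ) * s / 2) *
            ∑' n : ℕ, (Real.cos (2 * π * (n + 1) * a) : ℂ) / ((n : ℂ) + 1) ^ (1 - s) +
          Complex.cos ((π : ℂ) * s / 2) *
            ∑' n : ℕ, (Real.sin (2 * π * (n + 1) * a) : ℂ) / ((n : ℂ) + 1) ^ (1 - s)) :=
  hurwitz_formula_general a s hs
end

section
/- For real s < −1, Σ_{k=1}^∞ s_{−s−1/2, 1/2}(2πk) / k^{1/2−s} = −1/(2s(2π)^{s−1/2}) · ( 1/2 + 1/(s−1) ). -/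
open Complex Real Filter Set MeasureTheory

/-- Pochhammer symbol `(b)ₙ`. -/
noncomputable def poch (b : ℂ) (n : ℕ) : ℂ := ∏ i ∈ Finset.range n, (b + i)

/-- The generalized hypergeometric function `₁F₂(1; b₁, b₂; w)`. -/
noncomputable def oneF2 (b₁ b₂ w : ℂ) : ℂ := ∑' n : ℕ, w ^ n / (poch b₁ n * poch b₂ n)

/-- The Lommel function of the first kind `s_{μ,ν}(z)`. -/
noncomputable def lommel_s (μ ν z : ℂ) : ℂ :=
  z ^ (μ + 1) / ((μ - ν + 1) * (μ + ν + 1)) *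
    oneF2 ((μ - ν + 3) / 2) ((μ + ν + 3) / 2) (-z ^ 2 / 4)

/-- The Bessel function of the first kind `J_ν(z)`. -/
noncomputable def besselJ (ν z : ℂ) : ℂ :=
  ∑' m : ℕ, (-1) ^ m / (Complex.Gamma (m + 1) * Complex.Gamma (ν + m + 1)) * (z / 2) ^ (ν + 2 * m)

/-- The Lommel function of the second kind `S_{μ,ν}(z)` (for `ν ∉ ℤ`). -/
noncomputable def lommel_S (μ ν z : ℂ) : ℂ :=
  lommel_s μ ν z +
    2 ^ (μ - 1) * Complex.Gamma ((μ - ν + 1) / 2) * Complex.Gamma ((μ + ν + 1) / 2) /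
      Complex.sin (ν * (π : ℂ)) *
      (Complex.cos ((μ - ν) * (π : ℂ) / 2) * besselJ (-ν) z -
        Complex.cos ((μ + ν) * (π : ℂ) / 2) * besselJ ν z)

/-!
For `μ = c + 1/2`, `ν = 1/2` the duplication formula `(b)ₙ (b + 1/2)ₙ 4ⁿ = (2b)₂ₙ` turns the
`₁F₂` series into the termwise integral of the sine series against the Beta kernel `u^c (1-u)ⁿ`,
so that `s_{c+1/2,1/2}(x) = x^(c+1/2) ∫₀¹ u^c sin(x(1-u)) du`. At `x = 2πk` periodicity and one
integration by parts turn the summand into `(2π)^(c-1/2) k⁻² (1 - c ∫₀¹ u^(c-1) cos(2πku) du)`;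
summing over `k` with
`∑ cos(2πku)/k² = π² B₂(u)` and `ζ(2) = π²/6` gives the closed form, here with `c = -s - 1`.
-/

section

variable {c : ℝ}

theorem integral_rpow_mul_one_sub_pow_succ (hc : 0 ≤ c) (n : ℕ) :
    ∫ u in (0:ℝ)..1, u ^ c * (1 - u) ^ (n + 1) =
      (n + 1) / (c + 1) * ∫ u in (0:ℝ)..1, u ^ (c + 1) * (1 - u) ^ n := by
  have hc1 : c + 1 ≠ 0 := by positivity
  have hibp := intervalIntegral.integral_mul_deriv_eq_deriv_mul (a := 0) (b := 1)
    (u := fun t => (1 - t) ^ (n + 1)) (u' := fun t => -((n + 1) * (1 - t) ^ n))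
    (v := fun t => t ^ (c + 1) / (c + 1)) (v' := fun t => t ^ c)
    (fun t _ => by
      simpa using ((hasDerivAt_id t).const_sub 1).fun_pow (n + 1))
    (fun t _ => by
      simpa [hc1] using (Real.hasDerivAt_rpow_const (x := t) (p := c + 1)
        (Or.inr (by linarith))).div_const (c + 1))
    (by apply Continuous.intervalIntegrable; fun_prop)
    ((Real.continuous_rpow_const hc).intervalIntegrable 0 1)
  simp only [sub_self, zero_pow (Nat.succ_ne_zero n), Real.zero_rpow hc1, zero_div, zero_mul,
    mul_zero, sub_zero, neg_mul, intervalIntegral.integral_neg, sub_neg_eq_add, zero_add] at hibp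
  rw [← intervalIntegral.integral_const_mul]
  convert hibp using 1 <;> congr 1 with u <;> ring

theorem integral_rpow_mul_one_sub_pow (hc : 0 ≤ c) (n : ℕ) :
    ∫ u in (0:ℝ)..1, u ^ c * (1 - u) ^ n =
      n.factorial / ∏ j ∈ Finset.range (n + 1), (c + 1 + j) := by
  induction n generalizing c with
  | zero =>
    simp [integral_rpow (Or.inl (by linarith : -1 < c)), Real.zero_rpow (by positivity : c + 1 ≠ 0)]
  | succ n ih =>
    rw [integral_rpow_mul_one_sub_pow_succ hc, ih (by positivity),
      Finset.prod_range_succ' _ (n + 1)]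
    have hprod : 0 < ∏ j ∈ Finset.range (n + 1), (c + 1 + 1 + (j : ℝ)) :=
      Finset.prod_pos fun j _ => by positivity
    simp only [Nat.cast_add, Nat.cast_one, Nat.factorial_succ, Nat.cast_mul, CharP.cast_eq_zero,
      add_zero]
    field_simp
    exact Finset.prod_congr rfl fun j _ => by ring

theorem hasSum_integral_rpow_mul_sin_one_sub (hc : 0 ≤ c) (x : ℝ) :
    HasSum (fun n : ℕ => (-1) ^ n * x ^ (2 * n + 1) / ∏ j ∈ Finset.range (2 * n + 2), (c + 1 + j))
      (∫ u in (0:ℝ)..1, u ^ c * Real.sin (x * (1 - u))) := by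
  have hdom := intervalIntegral.hasSum_integral_of_dominated_convergence (a := 0) (b := 1)
    (μ := volume) (f := fun u => u ^ c * Real.sin (x * (1 - u)))
    (F := fun n u => (-1) ^ n * x ^ (2 * n + 1) / (2 * n + 1).factorial *
      (u ^ c * (1 - u) ^ (2 * n + 1)))
    (fun n _ => ‖(-1) ^ n * x ^ (2 * n + 1) / (2 * n + 1).factorial‖)
    (fun n => by
      refine Continuous.aestronglyMeasurable ?_
      have := Real.continuous_rpow_const hc
      fun_prop)
    (fun n => ae_of_all _ fun u hu => by
      rw [uIoc_of_le zero_le_one] at hu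
      have h1 : u ^ c ≤ 1 := Real.rpow_le_one hu.1.le hu.2 hc
      have h2 : (1 - u) ^ (2 * n + 1) ≤ 1 := pow_le_one₀ (by linarith [hu.2]) (by linarith [hu.1])
      have h3 : 0 ≤ (1 - u) ^ (2 * n + 1) := pow_nonneg (by linarith [hu.2]) _
      rw [norm_mul, Real.norm_of_nonneg (mul_nonneg (Real.rpow_nonneg hu.1.le c) h3)]
      exact mul_le_of_le_one_right (norm_nonneg _) (mul_le_one₀ h1 h3 h2))
    (ae_of_all _ fun _ _ => by exact (Real.hasSum_sin x).summable.norm)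
    intervalIntegrable_const
    (ae_of_all _ fun u _ => by
      refine ((Real.hasSum_sin (x * (1 - u))).mul_left (u ^ c)).congr_fun fun n => ?_
      rw [mul_pow]
      ring)
  refine hdom.congr_fun fun n => ?_
  rw [intervalIntegral.integral_const_mul, integral_rpow_mul_one_sub_pow hc]
  have : ((2 * n + 1).factorial : ℝ) ≠ 0 := by positivity
  field_simp

theorem poch_mul_poch_add_half_mul_four_pow (b : ℂ) (n : ℕ) :
    poch b n * poch (b + 1 / 2) n * 4 ^ n = poch (2 * b) (2 * n) := by
  induction n with
  | zero => simp [poch]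
  | succ n ih =>
    rw [show 2 * (n + 1) = 2 * n + 1 + 1 by ring]
    simp only [poch, Finset.prod_range_succ] at ih ⊢
    rw [← ih]
    push_cast
    ring

theorem oneF2_add_half (b w : ℂ) :
    oneF2 b (b + 1 / 2) w = ∑' n : ℕ, (4 * w) ^ n / poch (2 * b) (2 * n) := by
  refine tsum_congr fun n => ?_
  rw [← poch_mul_poch_add_half_mul_four_pow, mul_pow, mul_comm (4 ^ n : ℂ), mul_div_mul_right _ _
    (pow_ne_zero n (by norm_num))]

theorem poch_ofReal (r : ℝ) (n : ℕ) : poch r n = ((∏ i ∈ Finset.range n, (r + i) : ℝ) : ℂ) := by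
  simp [poch]

theorem lommel_s_add_half_half_eq_integral {x : ℝ} (hc : 0 ≤ c) (hx : 0 < x) :
    lommel_s ((c : ℂ) + 1 / 2) (1 / 2) x =
      ((x ^ (c + 1 / 2) * ∫ u in (0:ℝ)..1, u ^ c * Real.sin (x * (1 - u)) : ℝ) : ℂ) := by
  set P : ℕ → ℝ := fun n => ∏ i ∈ Finset.range n, (c + 3 + i)
  have hseries : oneF2 ((c + 1 / 2 - 1 / 2 + 3) / 2) ((c + 1 / 2 + 1 / 2 + 3) / 2) (-x ^ 2 / 4) =
      ((∑' n : ℕ, (-1) ^ n * x ^ (2 * n) / P (2 * n) : ℝ) : ℂ) := by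
    rw [show ((c : ℂ) + 1 / 2 + 1 / 2 + 3) / 2 = (c + 1 / 2 - 1 / 2 + 3) / 2 + 1 / 2 by ring,
      oneF2_add_half, Complex.ofReal_tsum]
    refine tsum_congr fun n => ?_
    rw [show 2 * (((c : ℂ) + 1 / 2 - 1 / 2 + 3) / 2) = ((c + 3 : ℝ) : ℂ) by push_cast; ring,
      poch_ofReal, mul_div_cancel₀ _ (by norm_num : (4 : ℂ) ≠ 0), neg_pow, pow_mul]
    simp [P]
  have hprod (n : ℕ) : ∏ j ∈ Finset.range (n + 2), (c + 1 + j) = (c + 1) * (c + 2) * P n := by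
    rw [Finset.prod_range_succ', Finset.prod_range_succ']
    have hshift : ∏ i ∈ Finset.range n, (c + 1 + ((i + 1 : ℕ) + 1 : ℕ)) = P n :=
      Finset.prod_congr rfl fun i _ => by push_cast; ring
    rw [hshift]
    push_cast
    ring
  rw [lommel_s, hseries, (hasSum_integral_rpow_mul_sin_one_sub hc x).tsum_eq.symm,
    show (c : ℂ) + 1 / 2 + 1 = ((c + 3 / 2 : ℝ) : ℂ) by push_cast; ring,
    ← Complex.ofReal_cpow hx.le, show ((c : ℂ) + 1 / 2 - 1 / 2 + 1) * (c + 1 / 2 + 1 / 2 + 1) = ((c + 1) * (c + 2) : ℝ) by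
    push_cast; ring, ← Complex.ofReal_div, ← Complex.ofReal_mul, ← tsum_mul_left, ← tsum_mul_left]
  congr 1
  refine tsum_congr fun n => ?_
  rw [hprod, show c + 3 / 2 = c + 1 / 2 + 1 by ring, Real.rpow_add_one hx.ne', pow_succ]
  have hP : 0 < P (2 * n) := Finset.prod_pos fun i _ => by positivity
  field_simp

theorem integral_rpow_mul_sin_mul {x : ℝ} (hc : 0 < c) (hx : x ≠ 0) :
    ∫ u in (0:ℝ)..1, u ^ c * Real.sin (x * u) =
      -Real.cos x / x + c / x * ∫ u in (0:ℝ)..1, u ^ (c - 1) * Real.cos (x * u) := by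
  have hibp := intervalIntegral.integral_mul_deriv_eq_deriv_mul_of_hasDerivAt (a := 0) (b := 1)
    (u := fun t => t ^ c) (u' := fun t => c * t ^ (c - 1))
    (v := fun t => -Real.cos (x * t) / x) (v' := fun t => Real.sin (x * t))
    (Real.continuous_rpow_const hc.le).continuousOn (by fun_prop)
    (fun t ht => Real.hasDerivAt_rpow_const (Or.inl (by simp at ht; exact ht.1.ne')))
    (fun t _ => by
      have := (((hasDerivAt_id t).const_mul x).cos.neg).div_const x
      simpa [hx] using this)
    ((intervalIntegral.intervalIntegrable_rpow' (by linarith)).const_mul c)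
    (by apply Continuous.intervalIntegrable; fun_prop)
  rw [hibp, Real.one_rpow, Real.zero_rpow hc.ne', mul_one, one_mul, zero_mul, sub_zero,
    sub_eq_add_neg, ← intervalIntegral.integral_neg, ← intervalIntegral.integral_const_mul]
  congr 1
  refine intervalIntegral.integral_congr fun u _ => ?_
  ring

theorem integral_rpow_mul_sin_two_pi_nat_mul_one_sub (hc : 0 < c) {n : ℕ} (hn : n ≠ 0) :
    ∫ u in (0:ℝ)..1, u ^ c * Real.sin (2 * π * n * (1 - u)) =
      (1 - c * ∫ u in (0:ℝ)..1, u ^ (c - 1) * Real.cos (2 * π * n * u)) / (2 * π * n) := by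
  have hsin (u : ℝ) : Real.sin (2 * π * n * (1 - u)) = -Real.sin (2 * π * n * u) := by
    rw [← Real.sin_nat_mul_two_pi_sub]
    ring_nf
  have hx : 2 * π * n ≠ 0 := by positivity
  simp_rw [hsin, mul_neg, intervalIntegral.integral_neg]
  rw [integral_rpow_mul_sin_mul hc hx, mul_comm (2 * π) n, Real.cos_nat_mul_two_pi,
    mul_comm (n : ℝ) (2 * π)]
  field_simp
  ring

theorem hasSum_cos_div_sq {u : ℝ} (hu : u ∈ Icc (0:ℝ) 1) :
    HasSum (fun k : ℕ => Real.cos (2 * π * (k + 1) * u) / (k + 1) ^ 2)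
      (π ^ 2 * (u ^ 2 - u + 1 / 6)) := by
  have hB : ((Polynomial.bernoulli 2).map (algebraMap ℚ ℝ)).eval u = u ^ 2 - u + 1 / 6 := by
    simp [Polynomial.bernoulli, Finset.sum_range_succ, bernoulli_two, sub_eq_add_neg]
  have h := hasSum_one_div_nat_pow_mul_cos one_ne_zero hu
  rw [← hasSum_nat_add_iff' 1] at h
  norm_num [hB] at h
  rw [show (2 * π) ^ 2 / 2 / 2 = π ^ 2 by ring] at h
  exact h.congr_fun fun k => div_eq_inv_mul _ _

theorem hasSum_integral_mul_cos_div_sq {f : ℝ → ℝ} (hf : IntervalIntegrable f volume 0 1) :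
    HasSum (fun k : ℕ => ∫ u in (0:ℝ)..1, f u * Real.cos (2 * π * (k + 1) * u) / (k + 1) ^ 2)
      (∫ u in (0:ℝ)..1, f u * (π ^ 2 * (u ^ 2 - u + 1 / 6))) := by
  have hζ : Summable fun k : ℕ => 1 / ((k : ℝ) + 1) ^ 2 := by
    exact_mod_cast (summable_nat_add_iff 1).mpr (Real.summable_one_div_nat_pow.mpr one_lt_two)
  refine intervalIntegral.hasSum_integral_of_dominated_convergence
    (fun k u => ‖f u‖ * (1 / ((k : ℝ) + 1) ^ 2)) (fun k => ?_) (fun k => ae_of_all _ fun u _ => ?_)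
    (ae_of_all _ fun u _ => hζ.mul_left _) ?_ (ae_of_all _ fun u hu => ?_)
  · rw [uIoc_of_le zero_le_one]
    have := hf.1.aestronglyMeasurable
    fun_prop
  · rw [norm_div, norm_mul, mul_div_assoc, Real.norm_of_nonneg (by positivity : (0:ℝ) ≤ _ ^ 2),
      one_div]
    gcongr ‖f u‖ * ?_
    rw [div_eq_mul_inv]
    exact mul_le_of_le_one_left (by positivity) (by simpa using Real.abs_cos_le_one _)
  · simp_rw [tsum_mul_left]
    exact hf.norm.mul_const _
  · rw [uIoc_of_le zero_le_one] at hu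
    exact ((hasSum_cos_div_sq (Ioc_subset_Icc_self hu)).mul_left (f u)).congr_fun fun k => by ring

theorem integral_rpow_sub_one_mul_bernoulli_two (hc : 0 < c) :
    ∫ u in (0:ℝ)..1, u ^ (c - 1) * (π ^ 2 * (u ^ 2 - u + 1 / 6)) =
      π ^ 2 * (1 / (c + 2) - 1 / (c + 1) + 1 / (6 * c)) := by
  have hpoint : EqOn (fun u : ℝ => u ^ (c - 1) * (π ^ 2 * (u ^ 2 - u + 1 / 6)))
      (fun u => π ^ 2 * (u ^ (c + 1) - u ^ c + u ^ (c - 1) / 6)) (uIcc 0 1) := by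
    intro u hu
    rw [uIcc_of_le zero_le_one] at hu
    have h2 : u ^ (c + 1) = u ^ (c - 1) * u ^ 2 := by
      rw [← Real.rpow_two, ← Real.rpow_add' hu.1 (by linarith)]
      ring_nf
    have h1 : u ^ c = u ^ (c - 1) * u := by
      rw [← Real.rpow_add_one' hu.1 (by linarith)]
      ring_nf
    simp only [h2, h1]
    ring
  have hint (r : ℝ) (hr : -1 < r) : IntervalIntegrable (fun u : ℝ => u ^ r) volume 0 1 :=
    intervalIntegral.intervalIntegrable_rpow' hr
  have hmoment (r : ℝ) (hr : -1 < r) : ∫ u in (0:ℝ)..1, u ^ r = 1 / (r + 1) := by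
    rw [integral_rpow (Or.inl hr), Real.one_rpow, Real.zero_rpow (by linarith), sub_zero]
  rw [intervalIntegral.integral_congr hpoint, intervalIntegral.integral_const_mul,
    intervalIntegral.integral_add ((hint _ (by linarith)).sub (hint _ (by linarith)))
      ((hint _ (by linarith)).div_const 6),
    intervalIntegral.integral_sub (hint _ (by linarith)) (hint _ (by linarith)),
    intervalIntegral.integral_div, hmoment _ (by linarith), hmoment _ (by linarith),
    hmoment _ (by linarith), sub_add_cancel]
  have := hc.ne'
  field_simp
  ring

theorem hasSum_rpow_mul_integral_sin_div_rpow (hc : 0 < c) :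
    HasSum (fun k : ℕ => (2 * π * (k + 1)) ^ (c + 1 / 2) *
        (∫ u in (0:ℝ)..1, u ^ c * Real.sin (2 * π * (k + 1) * (1 - u))) / (k + 1) ^ (c + 3 / 2))
      ((2 * π) ^ (c + 3 / 2) * c / (4 * (c + 1) * (c + 2))) := by
  have h2π : 0 < 2 * π := by positivity
  have hζ : HasSum (fun k : ℕ => 1 / ((k : ℝ) + 1) ^ 2) (π ^ 2 / 6) := by
    simpa using (hasSum_nat_add_iff' 1).mpr hasSum_zeta_two
  have hJ := hasSum_integral_mul_cos_div_sq (intervalIntegral.intervalIntegrable_rpow'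
    (by linarith : -1 < c - 1))
  rw [integral_rpow_sub_one_mul_bernoulli_two hc] at hJ
  have hterm (k : ℕ) : (2 * π * (k + 1)) ^ (c + 1 / 2) *
        (∫ u in (0:ℝ)..1, u ^ c * Real.sin (2 * π * (k + 1) * (1 - u))) / (k + 1) ^ (c + 3 / 2) =
      (2 * π) ^ (c - 1 / 2) * (1 / ((k : ℝ) + 1) ^ 2 - c *
        ∫ u in (0:ℝ)..1, u ^ (c - 1) * Real.cos (2 * π * (k + 1) * u) / (k + 1) ^ 2) := by
    have hk : (0 : ℝ) < k + 1 := by positivity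
    have h := integral_rpow_mul_sin_two_pi_nat_mul_one_sub hc (Nat.succ_ne_zero k)
    push_cast at h
    rw [h, intervalIntegral.integral_div, Real.mul_rpow h2π.le hk.le,
      show c + 3 / 2 = c + 1 / 2 + 1 by ring, Real.rpow_add_one hk.ne',
      show c + 1 / 2 = c - 1 / 2 + 1 by ring, Real.rpow_add_one h2π.ne']
    have := Real.rpow_pos_of_pos hk (c - 1 / 2 + 1)
    field_simp
  have hval : (2 * π) ^ (c + 3 / 2) * c / (4 * (c + 1) * (c + 2)) =
      (2 * π) ^ (c - 1 / 2) *
        (π ^ 2 / 6 - c * (π ^ 2 * (1 / (c + 2) - 1 / (c + 1) + 1 / (6 * c)))) := by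
    rw [show c + 3 / 2 = c - 1 / 2 + 2 by ring, Real.rpow_add h2π, Real.rpow_two]
    have := hc.ne'
    field_simp
    ring
  rw [hval]
  exact ((hζ.sub (hJ.mul_left c)).mul_left _).congr_fun hterm

theorem hasSum_lommel_s_add_half_half_div_cpow (hc : 0 < c) :
    HasSum (fun k : ℕ => lommel_s ((c : ℂ) + 1 / 2) (1 / 2) ((2 * π * (k + 1) : ℝ) : ℂ) /
        ((k : ℂ) + 1) ^ ((c : ℂ) + 3 / 2))
      (((2 * π) ^ (c + 3 / 2) * c / (4 * (c + 1) * (c + 2)) : ℝ) : ℂ) := by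
  refine (Complex.hasSum_ofReal.mpr (hasSum_rpow_mul_integral_sin_div_rpow hc)).congr_fun
    fun k => ?_
  have hk : (0 : ℝ) ≤ k + 1 := by positivity
  have hpow : ((k : ℂ) + 1) ^ ((c : ℂ) + 3 / 2) = (((k + 1 : ℝ) ^ (c + 3 / 2) : ℝ) : ℂ) := by
    rw [Complex.ofReal_cpow hk]
    push_cast
    rfl
  rw [lommel_s_add_half_half_eq_integral hc.le (by positivity), hpow]
  push_cast
  ring

end

theorem lommel_s_series_eval_a_one (s : ℝ) (hs : s < -1) :
    ∑' k : ℕ, lommel_s (-(s : ℂ) - 1 / 2) (1 / 2) ((2 * π * (k + 1) : ℝ) : ℂ) /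
        ((k : ℂ) + 1) ^ ((1 : ℂ) / 2 - s) =
      -1 / (2 * (s : ℂ) * ((2 * π : ℝ) : ℂ) ^ ((s : ℂ) - 1 / 2)) *
        (1 / 2 + 1 / ((s : ℂ) - 1)) := by
  have hμ : -(s : ℂ) - 1 / 2 = ((-s - 1 : ℝ) : ℂ) + 1 / 2 := by push_cast; ring
  have hν : (1 : ℂ) / 2 - s = ((-s - 1 : ℝ) : ℂ) + 3 / 2 := by push_cast; ring
  have hpow : ((2 * π : ℝ) : ℂ) ^ ((s : ℂ) - 1 / 2) = (((2 * π) ^ (s - 1 / 2) : ℝ) : ℂ) := by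
    rw [Complex.ofReal_cpow (by positivity)]
    push_cast
    rfl
  rw [hμ, hν, (hasSum_lommel_s_add_half_half_div_cpow (by linarith)).tsum_eq, hpow]
  have hreal : (2 * π) ^ (-s - 1 + 3 / 2) * (-s - 1) / (4 * (-s - 1 + 1) * (-s - 1 + 2)) =
      -1 / (2 * s * (2 * π) ^ (s - 1 / 2)) * (1 / 2 + 1 / (s - 1)) := by
    rw [show -s - 1 + 3 / 2 = -(s - 1 / 2) by ring, Real.rpow_neg (by positivity),
      show -s - 1 + 1 = -s by ring, show -s - 1 + 2 = 1 - s by ring]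
    have : (2 * π) ^ (s - 1 / 2) ≠ 0 := by positivity
    have : s ≠ 0 := by linarith
    have : s - 1 ≠ 0 := by linarith
    have : 1 - s ≠ 0 := by linarith
    field_simp
    ring
  rw [hreal]
  push_cast
  ring
end

section
/- For real s < −1, Σ_{k=1}^∞ s_{−s−5/2, 1/2}(2πk) / k^{1/2−s} = (1/2)(2π)^{1/2−s} Γ(−s−2) · ( −1/(2Γ(1−s)) + 1/Γ(2−s) + 1/(12Γ(−s)) ). -/
open Complex Real Filter Set MeasureTheory

/-!
Write `σ = -s > 1`. Legendre's duplication `(σ/2)ₙ ((σ+1)/2)ₙ 4ⁿ = (σ)₂ₙ` collapses the `₁F₂`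
series to `Γ(σ) Σₙ (-x²)ⁿ / Γ(2n + σ)`, and integrating the Taylor series of `cos` termwise
against the beta integrals `∫₀¹ u²ⁿ (1-u)^(σ-2) du` identifies this with
`(σ - 1) ∫₀¹ cos(xu) (1-u)^(σ-2) du`. Hence `s_{σ-5/2,1/2}(2πk) / k^(σ+1/2)` is, up to the factor
`(2π)^(σ-3/2) / (σ-2)`, the integral of `(1-u)^(σ-2)` against `cos(2πku) / k²`. Summing over `k`,
the Fourier series `Σₖ cos(2πku) / k² = π² B₂(u)` of the second Bernoulli polynomial leaves
`π² ∫₀¹ B₂(u) (1-u)^(σ-2) du`, a combination of three beta integrals, i.e. of Gamma values.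
-/

open scoped Nat Interval

lemma poch_eq_ascPochhammer_eval (b : ℂ) (n : ℕ) : poch b n = (ascPochhammer ℂ n).eval b := by
  induction n with
  | zero => simp [poch]
  | succ n ih => simp [poch, Finset.prod_range_succ, ascPochhammer_succ_right, ← ih]

lemma Gamma_mul_poch {b : ℂ} (hb : ∀ k : ℕ, b ≠ -k) (n : ℕ) :
    Complex.Gamma b * poch b n = Complex.Gamma (b + n) := by
  rw [poch_eq_ascPochhammer_eval, ← Complex.Gamma_add_nat_div_Gamma_eq b hb,
    mul_div_cancel₀ _ (Complex.Gamma_ne_zero hb)]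

lemma poch_half_mul_poch_half_add_one (b : ℂ) (n : ℕ) :
    poch (b / 2) n * poch ((b + 1) / 2) n * 4 ^ n = poch b (2 * n) := by
  induction n with
  | zero => simp [poch]
  | succ n ih =>
    rw [show 2 * (n + 1) = 2 * n + 1 + 1 by ring]
    simp only [poch, Finset.prod_range_succ] at ih ⊢
    rw [← ih]
    push_cast
    ring

/-- Also true at `t = 0`, where both sides are junk zeros (`Γ 0 = 0`, `x / 0 = 0`); this covers the
degenerate case `s = -2` of the theorem, in which `s_{μ,ν}` divides by `μ - ν + 1 = 0`. -/
lemma Real.Gamma_eq_Gamma_add_one_div (t : ℝ) : Real.Gamma t = Real.Gamma (t + 1) / t := by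
  rcases eq_or_ne t 0 with rfl | ht
  · simp
  · rw [Real.Gamma_add_one ht, mul_div_cancel_left₀ _ ht]

lemma intervalIntegrable_one_sub_rpow {r : ℝ} (hr : -1 < r) :
    IntervalIntegrable (fun u : ℝ => (1 - u) ^ r) volume 0 1 := by
  simpa using (intervalIntegral.intervalIntegrable_rpow' (a := 1) (b := 0) hr).comp_sub_left 1

lemma integral_pow_mul_one_sub_rpow (m : ℕ) {c : ℝ} (hc : 0 < c) :
    ∫ u in 0..1, u ^ m * (1 - u) ^ (c - 1) = m ! * Real.Gamma c / Real.Gamma (m + 1 + c) := by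
  have hβ := Complex.Gamma_mul_Gamma_eq_betaIntegral (s := m + 1) (t := c)
    (by simp only [Complex.add_re, Complex.natCast_re, Complex.one_re]; positivity)
    (by simpa using hc)
  have hint : Complex.betaIntegral (m + 1) c = ↑(∫ u in 0..1, u ^ m * (1 - u) ^ (c - 1)) := by
    rw [Complex.betaIntegral, ← intervalIntegral.integral_ofReal]
    refine intervalIntegral.integral_congr fun u hu => ?_
    rw [uIcc_of_le zero_le_one] at hu
    simp only [add_sub_cancel_right, Complex.cpow_natCast]
    push_cast [Complex.ofReal_cpow (sub_nonneg.2 hu.2)]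
    rfl
  rw [hint, Complex.Gamma_nat_eq_factorial, Complex.Gamma_ofReal,
    show (m : ℂ) + 1 + c = ((m + 1 + c : ℝ) : ℂ) by push_cast; ring, Complex.Gamma_ofReal] at hβ
  rw [eq_div_iff (Real.Gamma_pos_of_pos (by positivity)).ne', mul_comm]
  exact_mod_cast hβ.symm

lemma integral_bernoulli_two_mul_one_sub_rpow {c : ℝ} (hc : 0 < c) :
    ∫ u in 0..1, (u ^ 2 - u + 1 / 6) * (1 - u) ^ (c - 1) =
      Real.Gamma c * (2 / Real.Gamma (c + 3) - 1 / Real.Gamma (c + 2) +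
        1 / (6 * Real.Gamma (c + 1))) := by
  have hint (m : ℕ) : IntervalIntegrable (fun u : ℝ => u ^ m * (1 - u) ^ (c - 1)) volume 0 1 :=
    (intervalIntegrable_one_sub_rpow (by linarith)).continuousOn_mul (by fun_prop)
  calc _ = (∫ u in 0..1, u ^ 2 * (1 - u) ^ (c - 1)) -
        (∫ u in 0..1, u ^ 1 * (1 - u) ^ (c - 1)) +
        (∫ u in 0..1, u ^ 0 * (1 - u) ^ (c - 1)) / 6 := by
        rw [← intervalIntegral.integral_sub (hint 2) (hint 1), ← intervalIntegral.integral_div,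
          ← intervalIntegral.integral_add ((hint 2).sub (hint 1)) ((hint 0).div_const 6)]
        exact intervalIntegral.integral_congr fun u _ => by ring
    _ = _ := by
        simp only [integral_pow_mul_one_sub_rpow _ hc, Nat.factorial]
        push_cast
        ring_nf

lemma hasSum_intervalIntegral_mul {g : ℕ → ℝ → ℝ} {G f : ℝ → ℝ} {c : ℕ → ℝ} {a b : ℝ}
    (hg : ∀ n, Continuous (g n)) (hgc : ∀ n, ∀ u ∈ Ι a b, |g n u| ≤ c n) (hc : Summable c)
    (hG : ∀ u ∈ Ι a b, HasSum (fun n => g n u) (G u)) (hf : IntervalIntegrable f volume a b) :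
    HasSum (fun n => ∫ u in a..b, g n u * f u) (∫ u in a..b, G u * f u) := by
  refine intervalIntegral.hasSum_integral_of_dominated_convergence (fun n u => c n * |f u|)
    (fun n => (hg n).aestronglyMeasurable.mul hf.def'.aestronglyMeasurable) ?_ ?_ ?_ ?_
  · refine fun n => ae_of_all _ fun u hu => ?_
    rw [norm_mul, Real.norm_eq_abs, Real.norm_eq_abs]
    exact mul_le_mul_of_nonneg_right (hgc n u hu) (abs_nonneg _)
  · exact ae_of_all _ fun u _ => hc.mul_right _
  · simp_rw [tsum_mul_right]
    exact hf.abs.const_mul _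
  · exact ae_of_all _ fun u hu => (hG u hu).mul_right _

lemma hasSum_intervalIntegral_cos_mul {f : ℝ → ℝ} (hf : IntervalIntegrable f volume 0 1)
    (x : ℝ) :
    HasSum (fun n : ℕ => (-1) ^ n * x ^ (2 * n) / (2 * n)! * ∫ u in 0..1, u ^ (2 * n) * f u)
      (∫ u in 0..1, Real.cos (x * u) * f u) := by
  have h := hasSum_intervalIntegral_mul
    (g := fun n u => (-1) ^ n * x ^ (2 * n) / (2 * n)! * u ^ (2 * n))
    (c := fun n => |x| ^ (2 * n) / (2 * n)!) (fun n => by fun_prop) ?_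
    (Real.hasSum_cosh |x|).summable (fun u _ => by
      simpa only [mul_pow, mul_div_right_comm, mul_assoc] using Real.hasSum_cos (x * u)) hf
  · simpa only [mul_assoc, intervalIntegral.integral_const_mul] using h
  · intro n u hu
    rw [uIoc_of_le zero_le_one] at hu
    have hu1 : |u| ^ (2 * n) ≤ 1 := pow_le_one₀ (abs_nonneg u) ((abs_of_pos hu.1).trans_le hu.2)
    rw [abs_mul, abs_div, abs_mul, abs_pow, abs_pow, abs_neg, abs_one, one_pow, one_mul, abs_pow,
      Nat.abs_cast]
    exact mul_le_of_le_one_right (by positivity) hu1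

lemma hasSum_cos_two_pi_mul_div_sq {u : ℝ} (hu : u ∈ Icc (0 : ℝ) 1) :
    HasSum (fun k : ℕ => 1 / ((k : ℝ) + 1) ^ 2 * Real.cos (2 * π * (k + 1) * u))
      (π ^ 2 * (u ^ 2 - u + 1 / 6)) := by
  have h := (hasSum_nat_add_iff' 1).mpr (hasSum_one_div_nat_pow_mul_cos one_ne_zero hu)
  have hB : ((Polynomial.bernoulli 2).map (algebraMap ℚ ℝ)).eval u = u ^ 2 - u + 1 / 6 := by
    simp [Polynomial.bernoulli, Finset.sum_range_succ, bernoulli_one,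
      bernoulli_eq_bernoulli'_of_ne_one, bernoulli'_two]
    ring
  norm_num [hB] at h
  rw [show π ^ 2 = (2 * π) ^ 2 / 2 / 2 by ring]
  simpa only [one_div] using h

lemma hasSum_intervalIntegral_cos_two_pi_mul {f : ℝ → ℝ}
    (hf : IntervalIntegrable f volume 0 1) :
    HasSum (fun k : ℕ =>
        1 / ((k : ℝ) + 1) ^ 2 * ∫ u in 0..1, Real.cos (2 * π * (k + 1) * u) * f u)
      (π ^ 2 * ∫ u in 0..1, (u ^ 2 - u + 1 / 6) * f u) := by
  have h := hasSum_intervalIntegral_mul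
    (g := fun k u => 1 / ((k : ℝ) + 1) ^ 2 * Real.cos (2 * π * (k + 1) * u))
    (c := fun k => 1 / ((k : ℝ) + 1) ^ 2) (fun k => by fun_prop) ?_ ?_
    (fun u hu => hasSum_cos_two_pi_mul_div_sq
      (Ioc_subset_Icc_self (by rwa [← uIoc_of_le zero_le_one]))) hf
  · simpa only [mul_assoc, intervalIntegral.integral_const_mul] using h
  · intro k u _
    rw [abs_mul, abs_of_pos (by positivity)]
    exact mul_le_of_le_one_right (by positivity) (abs_cos_le_one _)
  · exact_mod_cast (summable_nat_add_iff 1).mpr (Real.summable_one_div_nat_pow.mpr one_lt_two)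

lemma hasSum_neg_one_pow_mul_pow_div_Gamma {σ : ℝ} (hσ : 1 < σ) (x : ℝ) :
    HasSum (fun n : ℕ => (-1) ^ n * x ^ (2 * n) / Real.Gamma (2 * n + σ))
      ((∫ u in 0..1, Real.cos (x * u) * (1 - u) ^ (σ - 2)) / Real.Gamma (σ - 1)) := by
  have h := (hasSum_intervalIntegral_cos_mul
    (intervalIntegrable_one_sub_rpow (r := σ - 2) (by linarith)) x).div_const
    (Real.Gamma (σ - 1))
  refine h.congr_fun fun n => ?_
  have hβ := integral_pow_mul_one_sub_rpow (2 * n) (c := σ - 1) (by linarith)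
  rw [show σ - 1 - 1 = σ - 2 by ring, show ((2 * n : ℕ) : ℝ) + 1 + (σ - 1) = 2 * n + σ by
    push_cast; ring] at hβ
  rw [hβ]
  have : Real.Gamma (σ - 1) ≠ 0 := (Real.Gamma_pos_of_pos (by linarith)).ne'
  field_simp

lemma oneF2_eq_integral {σ : ℝ} (hσ : 1 < σ) (x : ℝ) :
    oneF2 (σ / 2) ((σ + 1) / 2) (-x ^ 2 / 4) =
      ((σ - 1) * ∫ u in 0..1, Real.cos (x * u) * (1 - u) ^ (σ - 2) : ℝ) := by
  have hσk : ∀ k : ℕ, (σ : ℂ) ≠ -k := fun k h => by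
    have := congrArg Complex.re h
    simp only [Complex.ofReal_re, Complex.neg_re, Complex.natCast_re] at this
    linarith [k.cast_nonneg (α := ℝ)]
  have hσ0 : 0 < σ := by linarith
  have hterm (n : ℕ) : (-(x : ℂ) ^ 2 / 4) ^ n / (poch (σ / 2) n * poch ((σ + 1) / 2) n) =
      ↑(Real.Gamma σ * ((-1) ^ n * x ^ (2 * n) / Real.Gamma (2 * n + σ))) := by
    have hpoch : poch (σ / 2) n * poch ((σ + 1) / 2) n =
        Complex.Gamma (σ + ↑(2 * n)) / Complex.Gamma σ / 4 ^ n := by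
      rw [eq_div_iff (pow_ne_zero _ (by norm_num)), poch_half_mul_poch_half_add_one,
        eq_div_iff (Complex.Gamma_ne_zero hσk), mul_comm, Gamma_mul_poch hσk]
    have hΓ : Complex.Gamma (σ + ↑(2 * n)) ≠ 0 := by
      refine Complex.Gamma_ne_zero_of_re_pos ?_
      simp only [Complex.add_re, Complex.ofReal_re, Complex.natCast_re]
      positivity
    rw [hpoch, neg_div, neg_pow, div_pow, ← pow_mul]
    push_cast [← Complex.Gamma_ofReal]
    field_simp
    ring_nf
  have hΓ : Real.Gamma σ = (σ - 1) * Real.Gamma (σ - 1) := by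
    simpa using Real.Gamma_add_one (s := σ - 1) (by linarith)
  rw [oneF2, tsum_congr hterm, ← Complex.ofReal_tsum,
    ((hasSum_neg_one_pow_mul_pow_div_Gamma hσ x).mul_left (Real.Gamma σ)).tsum_eq, hΓ]
  have := (Real.Gamma_pos_of_pos (by linarith : 0 < σ - 1)).ne'
  congr 1
  field_simp

lemma lommel_s_half_eq_integral {σ : ℝ} (hσ : 1 < σ) {x : ℝ} (hx : 0 ≤ x) :
    lommel_s (σ - 5 / 2) (1 / 2) x =
      (x ^ (σ - 3 / 2) / (σ - 2) * ∫ u in 0..1, Real.cos (x * u) * (1 - u) ^ (σ - 2) : ℝ) := by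
  rw [lommel_s, show (σ : ℂ) - 5 / 2 - 1 / 2 + 3 = σ by ring,
    show (σ : ℂ) - 5 / 2 + 1 / 2 + 3 = σ + 1 by ring, oneF2_eq_integral hσ x,
    show (σ : ℂ) - 5 / 2 + 1 = ((σ - 3 / 2 : ℝ) : ℂ) by push_cast; ring,
    ← Complex.ofReal_cpow hx, show ((σ : ℂ) - 5 / 2 - 1 / 2 + 1) * (σ - 5 / 2 + 1 / 2 + 1) =
      ((σ - 2) * (σ - 1) : ℝ) by push_cast; ring]
  norm_cast
  have : σ - 1 ≠ 0 := by linarith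
  field_simp

lemma hasSum_lommel_s_half {σ : ℝ} (hσ : 1 < σ) :
    HasSum (fun k : ℕ => lommel_s (σ - 5 / 2) (1 / 2) ((2 * π * (k + 1) : ℝ) : ℂ) /
        ((k : ℂ) + 1) ^ ((σ : ℂ) + 1 / 2))
      ↑(1 / 2 * (2 * π) ^ (σ + 1 / 2) * Real.Gamma (σ - 2) *
        (-1 / (2 * Real.Gamma (σ + 1)) + 1 / Real.Gamma (σ + 2) + 1 / (12 * Real.Gamma σ))) := by
  have hf := intervalIntegrable_one_sub_rpow (r := σ - 2) (by linarith)
  have hI := integral_bernoulli_two_mul_one_sub_rpow (c := σ - 1) (by linarith)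
  rw [show σ - 1 - 1 = σ - 2 by ring] at hI
  have h := Complex.hasSum_ofReal.mpr
    ((hasSum_intervalIntegral_cos_two_pi_mul hf).mul_left ((2 * π) ^ (σ - 3 / 2) / (σ - 2)))
  convert h using 1
  · funext k
    have hk : (0 : ℝ) < k + 1 := by positivity
    rw [lommel_s_half_eq_integral hσ (by positivity),
      show (k : ℂ) + 1 = ((k + 1 : ℝ) : ℂ) by push_cast; ring,
      show (σ : ℂ) + 1 / 2 = ((σ + 1 / 2 : ℝ) : ℂ) by push_cast; ring,
      ← Complex.ofReal_cpow hk.le, ← Complex.ofReal_div]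
    congr 1
    rw [Real.mul_rpow (by positivity) hk.le, show σ + 1 / 2 = σ - 3 / 2 + 2 by ring,
      Real.rpow_add hk, Real.rpow_two]
    have := (Real.rpow_pos_of_pos hk (σ - 3 / 2)).ne'
    field_simp
  · congr 1
    rw [hI, Real.Gamma_eq_Gamma_add_one_div (σ - 2), show σ + 1 / 2 = σ - 3 / 2 + 2 by ring,
      Real.rpow_add (by positivity), Real.rpow_two]
    ring_nf

theorem lommel_s_series_shifted (s : ℝ) (hs : s < -1) :
    ∑' k : ℕ, lommel_s (-(s : ℂ) - 5 / 2) (1 / 2) ((2 * π * (k + 1) : ℝ) : ℂ) /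
        ((k : ℂ) + 1) ^ ((1 : ℂ) / 2 - s) =
      (1 / 2) * ((2 * π : ℝ) : ℂ) ^ ((1 : ℂ) / 2 - s) * Complex.Gamma (-(s : ℂ) - 2) *
        (-1 / (2 * Complex.Gamma (1 - (s : ℂ))) + 1 / Complex.Gamma (2 - (s : ℂ)) +
          1 / (12 * Complex.Gamma (-(s : ℂ)))) := by
  have h := hasSum_lommel_s_half (σ := -s) (by linarith)
  rw [show ((-s : ℝ) : ℂ) - 5 / 2 = -(s : ℂ) - 5 / 2 by push_cast; ring,
    show ((-s : ℝ) : ℂ) + 1 / 2 = 1 / 2 - s by push_cast; ring] at h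
  rw [h.tsum_eq]
  push_cast [Complex.ofReal_cpow Real.two_pi_pos.le, ← Complex.Gamma_ofReal]
  ring_nf
end

section
/- For fixed real a > 0, the function s ↦ ∫_0^∞ e^{−2πkx} sin(s·arctan(x/a)) / (a²+x²)^{s/2} dx is an entire function of s, for each positive integer k. -/
open Complex Real Filter Set MeasureTheory Topology
set_option maxHeartbeats 1000000

lemma norm_sin_le' (z : ℂ) : ‖Complex.sin z‖ ≤ Real.exp ‖z‖ := by
  rw [Complex.sin]
  have h1 : ‖Complex.exp (-z * Complex.I)‖ ≤ Real.exp ‖z‖ := by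
    rw [Complex.norm_exp]
    refine Real.exp_le_exp.2 ?_
    calc (-z * Complex.I).re ≤ ‖-z * Complex.I‖ := Complex.re_le_norm _
      _ = ‖z‖ := by simp
  have h2 : ‖Complex.exp (z * Complex.I)‖ ≤ Real.exp ‖z‖ := by
    rw [Complex.norm_exp]
    refine Real.exp_le_exp.2 ?_
    calc (z * Complex.I).re ≤ ‖z * Complex.I‖ := Complex.re_le_norm _
      _ = ‖z‖ := by simp
  calc ‖(Complex.exp (-z * Complex.I) - Complex.exp (z * Complex.I)) * Complex.I / 2‖
      = ‖Complex.exp (-z * Complex.I) - Complex.exp (z * Complex.I)‖ / 2 := by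
        simp [norm_div, norm_mul]
    _ ≤ (‖Complex.exp (-z * Complex.I)‖ + ‖Complex.exp (z * Complex.I)‖) / 2 := by
        gcongr; exact norm_sub_le _ _
    _ ≤ (Real.exp ‖z‖ + Real.exp ‖z‖) / 2 := by gcongr
    _ = Real.exp ‖z‖ := by ring

lemma norm_cos_le' (z : ℂ) : ‖Complex.cos z‖ ≤ Real.exp ‖z‖ := by
  rw [Complex.cos]
  have h1 : ‖Complex.exp (-z * Complex.I)‖ ≤ Real.exp ‖z‖ := by
    rw [Complex.norm_exp]
    refine Real.exp_le_exp.2 ?_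
    calc (-z * Complex.I).re ≤ ‖-z * Complex.I‖ := Complex.re_le_norm _
      _ = ‖z‖ := by simp
  have h2 : ‖Complex.exp (z * Complex.I)‖ ≤ Real.exp ‖z‖ := by
    rw [Complex.norm_exp]
    refine Real.exp_le_exp.2 ?_
    calc (z * Complex.I).re ≤ ‖z * Complex.I‖ := Complex.re_le_norm _
      _ = ‖z‖ := by simp
  calc ‖(Complex.exp (z * Complex.I) + Complex.exp (-z * Complex.I)) / 2‖
      = ‖Complex.exp (z * Complex.I) + Complex.exp (-z * Complex.I)‖ / 2 := by
        simp [norm_div]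
    _ ≤ (‖Complex.exp (z * Complex.I)‖ + ‖Complex.exp (-z * Complex.I)‖) / 2 := by
        gcongr; exact norm_add_le _ _
    _ ≤ (Real.exp ‖z‖ + Real.exp ‖z‖) / 2 := by gcongr
    _ = Real.exp ‖z‖ := by ring

theorem integral_entire (a : ℝ) (ha : 0 < a) (k : ℕ) (hk : 1 ≤ k) :
    Differentiable ℂ (fun s : ℂ =>
      ∫ x in Ioi (0 : ℝ),
        Complex.exp (-(2 * π * k * x)) * Complex.sin (s * (Real.arctan (x / a) : ℂ)) /
          ((a ^ 2 + x ^ 2 : ℝ) : ℂ) ^ (s / 2)) := by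
  have hg : ∀ x : ℝ, (0:ℝ) < a ^ 2 + x ^ 2 := fun x => by positivity
  have hkey : ∀ (s : ℂ) (x : ℝ),
      Complex.exp (-(2 * ↑π * ↑k * ↑x)) * Complex.sin (s * (Real.arctan (x / a) : ℂ)) /
          ((a ^ 2 + x ^ 2 : ℝ) : ℂ) ^ (s / 2)
        = Complex.exp (-(2 * ↑π * ↑k * ↑x)) *
            (Complex.sin (s * (Real.arctan (x / a) : ℂ)) *
              Complex.exp (-((Real.log (a ^ 2 + x ^ 2) / 2 : ℝ) : ℂ) * s)) := by
    intro s x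
    have hne : ((a ^ 2 + x ^ 2 : ℝ) : ℂ) ≠ 0 := by exact_mod_cast (hg x).ne'
    rw [Complex.cpow_def_of_ne_zero hne, ← Complex.ofReal_log (hg x).le,
      div_eq_mul_inv, ← Complex.exp_neg, mul_assoc]
    congr 2
    push_cast
    ring
  simp only [hkey]
  intro s₀
  set R : ℝ := ‖s₀‖ + 1 with hRdef
  clear_value R
  have hR0 : 0 < R := by rw [hRdef]; positivity
  have hR1 : 1 ≤ R := by rw [hRdef]; nlinarith [norm_nonneg s₀]
  have hsR : ‖s₀‖ + 1 ≤ R := hRdef.ge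
  have hk1 : (1:ℝ) ≤ (k:ℝ) := by exact_mod_cast hk
  have h2pk : 0 < 2 * π * (k:ℝ) - 1 := by nlinarith [Real.pi_gt_three]
  -- notation shortcuts
  set c : ℝ → ℝ := fun x => Real.log (a ^ 2 + x ^ 2) / 2 with hcdef
  set bound : ℝ → ℝ := fun x =>
    Real.exp (-(2 * π * k * x)) *
      ((2 + |c x|) * (Real.exp (2 * R) * Real.exp (R * |c x|))) with hbdef
  have hbound_nonneg : ∀ x, 0 ≤ bound x := fun x => by
    rw [hbdef]; positivity
  -- continuity facts
  have hclog : Continuous fun x : ℝ => Real.log (a ^ 2 + x ^ 2) :=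
    Continuous.log (by continuity) (fun x => (hg x).ne')
  have hcc : Continuous c := by rw [hcdef]; exact hclog.div_const 2
  have hccC : Continuous fun x : ℝ => ((c x : ℝ) : ℂ) := Complex.continuous_ofReal.comp hcc
  have hE : Continuous fun x : ℝ => Complex.exp (-(2 * (π:ℂ) * (k:ℂ) * (x:ℂ))) := by
    fun_prop
  have hθC : Continuous fun x : ℝ => ((Real.arctan (x / a) : ℝ) : ℂ) :=
    Complex.continuous_ofReal.comp (Real.continuous_arctan.comp (continuous_id.div_const a))
  have hFcont : ∀ s : ℂ, Continuous fun x : ℝ =>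
      Complex.exp (-(2 * (π:ℂ) * (k:ℂ) * (x:ℂ))) *
        (Complex.sin (s * ((Real.arctan (x / a) : ℝ) : ℂ)) *
          Complex.exp (-((c x : ℝ) : ℂ) * s)) := by
    intro s
    exact hE.mul ((Complex.continuous_sin.comp (continuous_const.mul hθC)).mul
      (Complex.continuous_exp.comp (hccC.neg.mul continuous_const)))
  have hF'cont : ∀ s : ℂ, Continuous fun x : ℝ =>
      Complex.exp (-(2 * (π:ℂ) * (k:ℂ) * (x:ℂ))) *
        ((Complex.cos (s * ((Real.arctan (x / a) : ℝ) : ℂ)) * ((Real.arctan (x / a) : ℝ) : ℂ)) *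
            Complex.exp (-((c x : ℝ) : ℂ) * s) +
          Complex.sin (s * ((Real.arctan (x / a) : ℝ) : ℂ)) *
            (Complex.exp (-((c x : ℝ) : ℂ) * s) * -((c x : ℝ) : ℂ))) := by
    intro s
    refine hE.mul (Continuous.add ?_ ?_)
    · exact ((Complex.continuous_cos.comp (continuous_const.mul hθC)).mul hθC).mul
        (Complex.continuous_exp.comp (hccC.neg.mul continuous_const))
    · exact (Complex.continuous_sin.comp (continuous_const.mul hθC)).mul
        ((Complex.continuous_exp.comp (hccC.neg.mul continuous_const)).mul hccC.neg)
  have hbound_cont : Continuous bound := by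
    rw [hbdef]
    exact (Real.continuous_exp.comp (by continuity)).mul
      ((continuous_const.add hcc.abs).mul
        (continuous_const.mul (Real.continuous_exp.comp (continuous_const.mul hcc.abs))))
  set C : ℝ := (3 + |Real.log (a+1)|) * Real.exp (2*R) * Real.exp (R * Real.log (a+1)) with hCdef
  clear_value C
  have hble : ∀ x : ℝ, 1 ≤ x → bound x ≤
      C * (x ^ (R+1) * Real.exp (-(2*π*k-1) * x)) * Real.exp (-1 * x) := by
    intro x hx1
    have hx0 : (0:ℝ) < x := lt_of_lt_of_le one_pos hx1
    have hg1 : (1:ℝ) ≤ a^2 + x^2 := by nlinarith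
    have hL0 : 0 ≤ Real.log (a^2+x^2) := Real.log_nonneg hg1
    have hcx : |c x| = Real.log (a^2+x^2) / 2 := by
      rw [hcdef]; exact abs_of_nonneg (by positivity)
    have hx2 : (1:ℝ) ≤ x^2 := by nlinarith
    have hgle : a^2+x^2 ≤ ((a+1)*x)^2 := by
      nlinarith [mul_nonneg (sq_nonneg a) (by nlinarith : (0:ℝ) ≤ x^2 - 1),
        mul_pos ha (mul_pos hx0 hx0)]
    have hLle : Real.log (a^2+x^2) ≤ 2 * Real.log ((a+1)*x) := by
      have h := Real.log_le_log (hg x) hgle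
      rwa [Real.log_pow] at h
    have hlmul : Real.log ((a+1)*x) = Real.log (a+1) + Real.log x :=
      Real.log_mul (by positivity) hx0.ne'
    have hble' : |c x| ≤ Real.log (a+1) + Real.log x := by
      rw [hcx]; linarith
    have hlogx : Real.log x ≤ x := by nlinarith [Real.log_le_sub_one_of_pos hx0]
    have hcx0 : 0 ≤ |c x| := abs_nonneg _
    have h2b : 2 + |c x| ≤ (3 + |Real.log (a+1)|) * x := by
      nlinarith [abs_nonneg (Real.log (a+1)), le_abs_self (Real.log (a+1))]
    have hexpb : Real.exp (R * |c x|) ≤ Real.exp (R * Real.log (a+1)) * x ^ R := by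
      calc Real.exp (R * |c x|) ≤ Real.exp (R * (Real.log (a+1) + Real.log x)) := by
            apply Real.exp_le_exp.2; nlinarith
        _ = Real.exp (R * Real.log (a+1)) * x ^ R := by
            rw [Real.rpow_def_of_pos hx0, ← Real.exp_add]; ring_nf
    have hsplit : Real.exp (-(2*π*(k:ℝ)*x)) = Real.exp (-(2*π*(k:ℝ)-1)*x) * Real.exp (-1*x) := by
      rw [← Real.exp_add]; ring_nf
    calc bound x
        = Real.exp (-(2*π*k*x)) * ((2 + |c x|) * (Real.exp (2*R) * Real.exp (R*|c x|))) := by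
          rw [hbdef]
      _ ≤ Real.exp (-(2*π*k*x)) *
            (((3 + |Real.log (a+1)|) * x) *
              (Real.exp (2*R) * (Real.exp (R*Real.log (a+1)) * x ^ R))) := by
          gcongr
      _ = C * (x ^ (R+1) * Real.exp (-(2*π*k-1) * x)) * Real.exp (-1 * x) := by
          rw [hCdef, Real.rpow_add_one hx0.ne', hsplit]; ring
  have hbint : IntegrableOn bound (Ioi 0) := by
    apply integrable_of_isBigO_exp_neg one_pos hbound_cont.continuousOn
    have hptend : Tendsto
        (fun x : ℝ => C * (x ^ (R+1) * Real.exp (-(2*π*k-1) * x))) atTop (𝓝 0) := by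
      simpa using (tendsto_rpow_mul_exp_neg_mul_atTop_nhds_zero (R+1) _ h2pk).const_mul C
    rw [Asymptotics.isBigO_iff]
    refine ⟨1, ?_⟩
    filter_upwards [eventually_ge_atTop 1, hptend.eventually_le_const one_pos] with x hx1 hsm
    rw [Real.norm_eq_abs, Real.norm_eq_abs, _root_.abs_of_nonneg (hbound_nonneg x), Real.abs_exp]
    calc bound x ≤ C * (x ^ (R+1) * Real.exp (-(2*π*k-1) * x)) * Real.exp (-1 * x) := hble x hx1
      _ ≤ 1 * Real.exp (-1*x) :=
          mul_le_mul_of_nonneg_right hsm (Real.exp_pos _).le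
  -- basic norm estimates
  have hθb : ∀ x : ℝ, |Real.arctan (x / a)| ≤ 2 := by
    intro x
    have h1 := Real.arctan_lt_pi_div_two (x / a)
    have h2 := Real.neg_pi_div_two_lt_arctan (x / a)
    have h3 := Real.pi_le_four
    rw [abs_le]; constructor <;> nlinarith
  have hEnorm : ∀ x : ℝ,
      ‖Complex.exp (-(2 * (π:ℂ) * (k:ℂ) * (x:ℂ)))‖ = Real.exp (-(2*π*k*x)) := by
    intro x
    rw [show (-(2 * (π:ℂ) * (k:ℂ) * (x:ℂ))) = ((-(2*π*k*x) : ℝ) : ℂ) by push_cast; ring,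
      Complex.norm_exp_ofReal]
  have hexpnorm : ∀ (s : ℂ) (x : ℝ), ‖s‖ ≤ R →
      ‖Complex.exp (-((c x : ℝ):ℂ) * s)‖ ≤ Real.exp (R * |c x|) := by
    intro s x hs
    rw [Complex.norm_exp]
    apply Real.exp_le_exp.2
    have hre : (-((c x : ℝ):ℂ) * s).re = -(c x) * s.re := by simp
    have h1 : |s.re| ≤ ‖s‖ := Complex.abs_re_le_norm s
    rw [hre]
    calc -(c x) * s.re ≤ |(-(c x)) * s.re| := le_abs_self _
      _ = |c x| * |s.re| := by rw [abs_mul, abs_neg]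
      _ ≤ |c x| * R := by
          have := h1.trans hs
          exact mul_le_mul_of_nonneg_left this (abs_nonneg _)
      _ = R * |c x| := mul_comm _ _
  have hsinn : ∀ (s : ℂ) (x : ℝ), ‖s‖ ≤ R →
      ‖Complex.sin (s * ((Real.arctan (x/a) : ℝ):ℂ))‖ ≤ Real.exp (2*R) := by
    intro s x hs
    refine (norm_sin_le' _).trans (Real.exp_le_exp.2 ?_)
    rw [norm_mul, Complex.norm_real, Real.norm_eq_abs]
    calc ‖s‖ * |Real.arctan (x/a)| ≤ R * 2 :=
        mul_le_mul hs (hθb x) (abs_nonneg _) hR0.le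
      _ = 2*R := by ring
  have hcosn : ∀ (s : ℂ) (x : ℝ), ‖s‖ ≤ R →
      ‖Complex.cos (s * ((Real.arctan (x/a) : ℝ):ℂ))‖ ≤ Real.exp (2*R) := by
    intro s x hs
    refine (norm_cos_le' _).trans (Real.exp_le_exp.2 ?_)
    rw [norm_mul, Complex.norm_real, Real.norm_eq_abs]
    calc ‖s‖ * |Real.arctan (x/a)| ≤ R * 2 :=
        mul_le_mul hs (hθb x) (abs_nonneg _) hR0.le
      _ = 2*R := by ring
  have hballR : ∀ s ∈ Metric.ball s₀ 1, ‖s‖ ≤ R := by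
    intro s hs
    rw [Metric.mem_ball, dist_eq_norm] at hs
    calc ‖s‖ = ‖s₀ + (s - s₀)‖ := by congr 1; ring
      _ ≤ ‖s₀‖ + ‖s - s₀‖ := norm_add_le _ _
      _ ≤ R := by rw [hRdef]; linarith
  -- the derivative bound
  have hF'le : ∀ (x : ℝ) (s : ℂ), ‖s‖ ≤ R →
      ‖Complex.exp (-(2 * (π:ℂ) * (k:ℂ) * (x:ℂ))) *
        ((Complex.cos (s * ((Real.arctan (x / a) : ℝ) : ℂ)) * ((Real.arctan (x / a) : ℝ) : ℂ)) *
            Complex.exp (-((c x : ℝ) : ℂ) * s) +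
          Complex.sin (s * ((Real.arctan (x / a) : ℝ) : ℂ)) *
            (Complex.exp (-((c x : ℝ) : ℂ) * s) * -((c x : ℝ) : ℂ)))‖ ≤ bound x := by
    intro x s hs
    have e2 := hexpnorm s x hs
    have e3 := hsinn s x hs
    have e4 := hcosn s x hs
    have hb0 : (0:ℝ) ≤ |c x| := abs_nonneg _
    have nA : ‖(Complex.cos (s * ((Real.arctan (x / a) : ℝ) : ℂ)) * ((Real.arctan (x / a) : ℝ) : ℂ)) *
        Complex.exp (-((c x : ℝ) : ℂ) * s)‖ ≤ (Real.exp (2*R) * 2) * Real.exp (R * |c x|) := by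
      rw [norm_mul, norm_mul, Complex.norm_real, Real.norm_eq_abs]
      exact mul_le_mul (mul_le_mul e4 (hθb x) (abs_nonneg _) (Real.exp_pos _).le) e2
        (norm_nonneg _) (by positivity)
    have nB : ‖Complex.sin (s * ((Real.arctan (x / a) : ℝ) : ℂ)) *
        (Complex.exp (-((c x : ℝ) : ℂ) * s) * -((c x : ℝ) : ℂ))‖ ≤
        Real.exp (2*R) * (Real.exp (R * |c x|) * |c x|) := by
      rw [norm_mul, norm_mul, norm_neg, Complex.norm_real, Real.norm_eq_abs]
      exact mul_le_mul e3 (mul_le_mul_of_nonneg_right e2 hb0) (by positivity) (Real.exp_pos _).le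
    calc ‖Complex.exp (-(2 * (π:ℂ) * (k:ℂ) * (x:ℂ))) *
        ((Complex.cos (s * ((Real.arctan (x / a) : ℝ) : ℂ)) * ((Real.arctan (x / a) : ℝ) : ℂ)) *
            Complex.exp (-((c x : ℝ) : ℂ) * s) +
          Complex.sin (s * ((Real.arctan (x / a) : ℝ) : ℂ)) *
            (Complex.exp (-((c x : ℝ) : ℂ) * s) * -((c x : ℝ) : ℂ)))‖
        = Real.exp (-(2*π*k*x)) *
            ‖(Complex.cos (s * ((Real.arctan (x / a) : ℝ) : ℂ)) * ((Real.arctan (x / a) : ℝ) : ℂ)) *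
              Complex.exp (-((c x : ℝ) : ℂ) * s) +
            Complex.sin (s * ((Real.arctan (x / a) : ℝ) : ℂ)) *
              (Complex.exp (-((c x : ℝ) : ℂ) * s) * -((c x : ℝ) : ℂ))‖ := by
          rw [norm_mul, hEnorm]
      _ ≤ Real.exp (-(2*π*k*x)) *
            ((Real.exp (2*R) * 2) * Real.exp (R * |c x|) +
              Real.exp (2*R) * (Real.exp (R * |c x|) * |c x|)) := by
          gcongr
          exact (norm_add_le _ _).trans (by linarith)
      _ = bound x := by simp only [hbdef]; ring
  -- integrability of F s₀
  have hs₀R : ‖s₀‖ ≤ R := by rw [hRdef]; linarith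
  have hFint : Integrable (fun x : ℝ =>
      Complex.exp (-(2 * (π:ℂ) * (k:ℂ) * (x:ℂ))) *
        (Complex.sin (s₀ * ((Real.arctan (x / a) : ℝ) : ℂ)) *
          Complex.exp (-((c x : ℝ) : ℂ) * s₀))) (volume.restrict (Ioi 0)) := by
    apply Integrable.mono' hbint ((hFcont s₀).aestronglyMeasurable)
    refine Eventually.of_forall fun x => ?_
    have e2 := hexpnorm s₀ x hs₀R
    have e3 := hsinn s₀ x hs₀R
    calc ‖Complex.exp (-(2 * (π:ℂ) * (k:ℂ) * (x:ℂ))) *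
        (Complex.sin (s₀ * ((Real.arctan (x / a) : ℝ) : ℂ)) *
          Complex.exp (-((c x : ℝ) : ℂ) * s₀))‖
        = Real.exp (-(2*π*k*x)) *
            (‖Complex.sin (s₀ * ((Real.arctan (x / a) : ℝ) : ℂ))‖ *
              ‖Complex.exp (-((c x : ℝ) : ℂ) * s₀)‖) := by rw [norm_mul, norm_mul, hEnorm]
      _ ≤ Real.exp (-(2*π*k*x)) * (Real.exp (2*R) * Real.exp (R * |c x|)) := by
          gcongr
      _ ≤ bound x := by
          simp only [hbdef]
          have h1 : (0:ℝ) ≤ Real.exp (2*R) * Real.exp (R*|c x|) := by positivity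
          have h2 : Real.exp (2*R) * Real.exp (R*|c x|) ≤
              (2+|c x|) * (Real.exp (2*R) * Real.exp (R*|c x|)) :=
            le_mul_of_one_le_left h1 (by nlinarith [abs_nonneg (c x)])
          exact mul_le_mul_of_nonneg_left h2 (Real.exp_pos (-(2*π*(k:ℝ)*x))).le
  -- pointwise derivative
  have hderiv : ∀ (x : ℝ) (s : ℂ), HasDerivAt (fun s : ℂ =>
      Complex.exp (-(2 * (π:ℂ) * (k:ℂ) * (x:ℂ))) *
        (Complex.sin (s * ((Real.arctan (x / a) : ℝ) : ℂ)) *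
          Complex.exp (-((c x : ℝ) : ℂ) * s)))
      (Complex.exp (-(2 * (π:ℂ) * (k:ℂ) * (x:ℂ))) *
        ((Complex.cos (s * ((Real.arctan (x / a) : ℝ) : ℂ)) * ((Real.arctan (x / a) : ℝ) : ℂ)) *
            Complex.exp (-((c x : ℝ) : ℂ) * s) +
          Complex.sin (s * ((Real.arctan (x / a) : ℝ) : ℂ)) *
            (Complex.exp (-((c x : ℝ) : ℂ) * s) * -((c x : ℝ) : ℂ)))) s := by
    intro x s
    have h1 : HasDerivAt (fun s : ℂ => s * ((Real.arctan (x / a) : ℝ) : ℂ))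
        ((Real.arctan (x / a) : ℝ) : ℂ) s := hasDerivAt_mul_const _
    have hsin := (Complex.hasDerivAt_sin (s * ((Real.arctan (x / a) : ℝ) : ℂ))).comp s h1
    have hlin : HasDerivAt (fun z : ℂ => -((c x : ℝ) : ℂ) * z) (-((c x : ℝ) : ℂ)) s := by
      simpa using (hasDerivAt_id s).const_mul (-((c x : ℝ) : ℂ))
    have hexp := (Complex.hasDerivAt_exp (-((c x : ℝ) : ℂ) * s)).comp s hlin
    exact (hsin.mul hexp).const_mul _
  -- apply the dominated-derivative theorem
  have main := hasDerivAt_integral_of_dominated_loc_of_deriv_le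
    (μ := volume.restrict (Ioi (0:ℝ))) (x₀ := s₀) (bound := bound)
    (F := fun s x => Complex.exp (-(2 * (π:ℂ) * (k:ℂ) * (x:ℂ))) *
      (Complex.sin (s * ((Real.arctan (x / a) : ℝ) : ℂ)) *
        Complex.exp (-((c x : ℝ) : ℂ) * s)))
    (F' := fun s x => Complex.exp (-(2 * (π:ℂ) * (k:ℂ) * (x:ℂ))) *
      ((Complex.cos (s * ((Real.arctan (x / a) : ℝ) : ℂ)) * ((Real.arctan (x / a) : ℝ) : ℂ)) *
          Complex.exp (-((c x : ℝ) : ℂ) * s) +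
        Complex.sin (s * ((Real.arctan (x / a) : ℝ) : ℂ)) *
          (Complex.exp (-((c x : ℝ) : ℂ) * s) * -((c x : ℝ) : ℂ))))
    (Metric.ball_mem_nhds s₀ one_pos)
    (Eventually.of_forall fun s => (hFcont s).aestronglyMeasurable)
    hFint
    ((hF'cont s₀).aestronglyMeasurable)
    (Eventually.of_forall fun x s hs => hF'le x s (hballR s hs))
    hbint
    (Eventually.of_forall fun x s _ => hderiv x s)
  exact main.2.differentiableAt
end
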